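/- arXiv:2008.12074 — 2 statements merged into one kernel-verified Lean document; each statement's English description precedes it below -/
import Mathlib

section
/- Let F(x,y) = (1/3)x³ + (1/2)x² + (x+y)²y² + (1/4)y⁴ and let γ = (γ₁, γ₂) : I → ℝ² be a differentiable curve on an open interval I solving the gradient system γ'(t) = grad F(γ(t)) for all t ∈ I. If γ₂(t₀) = 0 for some t₀ ∈ I, then γ₂(t) = 0 for all t ∈ I, and γ₁ satisfies γ₁'(t) = γ₁(t)² + γ₁(t) on I. -/
/-! The second component of `grad F` factors as `∂F/∂y = g(x, y) · y` with `g` polynomial, so along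
a solution `γ₂` satisfies the linear equation `γ₂' = g(γ(t)) · γ₂` with continuous coefficient.
Uniqueness for this locally Lipschitz equation makes the zero set of `γ₂` open in `I`; it is also
relatively closed and contains `t₀`, so it is all of `I`. On the line `y = 0`, `∂F/∂x = x² + x`. -/

noncomputable def F (x y : ℝ) : ℝ :=
  (1/3) * x^3 + (1/2) * x^2 + (x + y)^2 * y^2 + (1/4) * y^4

noncomputable def Fx (x y : ℝ) : ℝ := deriv (fun s : ℝ => F s y) x

noncomputable def Fy (x y : ℝ) : ℝ := deriv (fun s : ℝ => F x s) y

open Filter Set Topology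

lemma Fx_eq (x y : ℝ) : Fx x y = x ^ 2 + x + 2 * (x + y) * y ^ 2 :=
  ((((hasDerivAt_pow 3 x).const_mul (1/3 : ℝ)).fun_add
    ((hasDerivAt_pow 2 x).const_mul (1/2 : ℝ))).fun_add
    ((((hasDerivAt_id' x).add_const y).fun_pow 2).mul_const (y ^ 2))).add_const
    ((1/4 : ℝ) * y ^ 4) |>.deriv.trans (by norm_num; ring)

lemma Fy_eq (x y : ℝ) : Fy x y = (2 * (x + y) * y + 2 * (x + y) ^ 2 + y ^ 2) * y :=
  (((hasDerivAt_const y ((1/3 : ℝ) * x ^ 3 + (1/2) * x ^ 2)).fun_add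
    ((((hasDerivAt_id' y).const_add x).fun_pow 2).fun_mul (hasDerivAt_pow 2 y))).fun_add
    ((hasDerivAt_pow 4 y).const_mul (1/4 : ℝ))) |>.deriv.trans (by norm_num; ring)

section LinearODE

variable {E : Type*} [NormedAddCommGroup E] [NormedSpace ℝ E] {f : ℝ → E} {g : ℝ → ℝ}

theorem eventuallyEq_zero_of_hasDerivAt_smul_self {t₀ : ℝ} (hg : ContinuousAt g t₀)
    (hf : ∀ᶠ t in 𝓝 t₀, HasDerivAt f (g t • f t) t) (h0 : f t₀ = 0) :
    f =ᶠ[𝓝 t₀] 0 := by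
  have hbound : ∀ᶠ t in 𝓝 t₀, ‖g t‖₊ < ‖g t₀‖₊ + 1 :=
    hg.nnnorm.eventually_lt continuousAt_const (lt_add_one _)
  exact ODE_solution_unique_of_eventually (v := fun t y => g t • y) (s := fun _ => univ)
    (hbound.mono fun t ht => ((lipschitzWith_smul (g t)).weaken ht.le).lipschitzOnWith)
    (hf.mono fun t ht => ⟨ht, trivial⟩)
    (Eventually.of_forall fun t => ⟨by simp, trivial⟩) h0

theorem IsPreconnected.eqOn_zero_of_hasDerivAt_smul_self {I : Set ℝ} (hIconn : IsPreconnected I)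
    (hIopen : IsOpen I) (hg : ContinuousOn g I) (hf : ∀ t ∈ I, HasDerivAt f (g t • f t) t)
    {t₀ : ℝ} (ht₀ : t₀ ∈ I) (h0 : f t₀ = 0) : EqOn f 0 I := by
  have hlocal : ∀ t ∈ I, f t = 0 → f =ᶠ[𝓝 t] 0 := fun t ht =>
    eventuallyEq_zero_of_hasDerivAt_smul_self (hg.continuousAt (hIopen.mem_nhds ht))
      (eventually_of_mem (hIopen.mem_nhds ht) hf)
  have hsub : I ⊆ {t | f =ᶠ[𝓝 t] 0} ∪ (I ∩ f ⁻¹' {0}ᶜ) := fun t ht =>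
    (em (f t = 0)).imp (hlocal t ht) fun h => ⟨ht, h⟩
  have hI := hIconn.subset_left_of_subset_union isOpen_setOfPred_eventually_nhds
    ((HasDerivAt.continuousOn hf).isOpen_inter_preimage hIopen isOpen_compl_singleton)
    (disjoint_left.2 fun t hu hv => hv.2 hu.self_of_nhds) hsub ⟨t₀, ht₀, hlocal t₀ ht₀ h0⟩
  exact fun t ht => (hI ht).self_of_nhds

end LinearODE

/-- If `γ = (γ₁, γ₂)` is a differentiable curve on an open interval `I` solving the
gradient system `γ' = grad F ∘ γ`, and `γ₂(t₀) = 0` for some `t₀ ∈ I`, then `γ₂ ≡ 0`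
on `I` and `γ₁` satisfies `γ₁' = γ₁² + γ₁` on `I`. -/
theorem solution_on_invariant_line
    (I : Set ℝ) (hIopen : IsOpen I) (hIconn : IsPreconnected I)
    (γ₁ γ₂ : ℝ → ℝ)
    (h₁ : ∀ t ∈ I, HasDerivAt γ₁ (Fx (γ₁ t) (γ₂ t)) t)
    (h₂ : ∀ t ∈ I, HasDerivAt γ₂ (Fy (γ₁ t) (γ₂ t)) t)
    (t₀ : ℝ) (ht₀ : t₀ ∈ I) (hzero : γ₂ t₀ = 0) :
    (∀ t ∈ I, γ₂ t = 0) ∧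
    (∀ t ∈ I, HasDerivAt γ₁ ((γ₁ t)^2 + γ₁ t) t) := by
  have hγ₁ : ContinuousOn γ₁ I := HasDerivAt.continuousOn h₁
  have hγ₂ : ContinuousOn γ₂ I := HasDerivAt.continuousOn h₂
  have hlinear : ∀ t ∈ I, HasDerivAt γ₂
      ((2 * (γ₁ t + γ₂ t) * γ₂ t + 2 * (γ₁ t + γ₂ t) ^ 2 + γ₂ t ^ 2) • γ₂ t) t := fun t ht => by
    simpa only [Fy_eq, smul_eq_mul] using h₂ t ht
  have hvanish : EqOn γ₂ 0 I :=
    hIconn.eqOn_zero_of_hasDerivAt_smul_self hIopen (by fun_prop) hlinear ht₀ hzero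
  refine ⟨hvanish, fun t ht => ?_⟩
  simpa [Fx_eq, hvanish ht] using h₁ t ht
end

section
/- The function E : (−1, ∞) → ℝ defined by E(x) = ∫₀ˣ e^{2t}/(t+1) dt is not a rational function of x and e^{2x}: there do not exist real polynomials P, Q in two variables such that Q(x, e^{2x}) ≠ 0 for all x ∈ (−1, ∞) and E(x) = P(x, e^{2x})/Q(x, e^{2x}) for all x ∈ (−1, ∞). -/
/-!
Write `u = e^{2x}`. If `E = P(x, u) / Q(x, u)`, differentiating `E · Q = P` and using
`E' = u / (x + 1)` gives `u Q² = (x + 1) (D P · Q - P · D Q)` along `u = e^{2x}`, where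
`D = ∂ₓ + 2u ∂ᵤ`. Since `e^{2x}` outgrows every polynomial, it is transcendental over `ℝ(x)`,
so this is an identity in `ℝ[x][u]`. Let `p, q` be the leading coefficients in `u` of `P, Q` and
`m, n` their degrees. Comparing top coefficients leaves two cases. If `m = n + 1`, then `p / q` is
a rational solution of `f' + 2f = 1 / (x + 1)`, which is impossible because of the pole at `-1`.
If `m > n + 1`, then `p / q` has constant logarithmic derivative `-2(m - n) ≠ 0`, which is
impossible by degrees.
-/

open Polynomial Filter Real Topology
open scoped Polynomial.Bivariate

namespace Polynomial

section Wronskian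

variable {R : Type*} [CommRing R]

theorem wronskian_mul_mul (d p q : R[X]) :
    wronskian (d * p) (d * q) = d ^ 2 * wronskian p q := by
  simp only [wronskian, derivative_mul]
  ring

theorem X_add_C_mul_derivative_pow (a : R) (k : ℕ) :
    (X + C a) * derivative ((X + C a) ^ k) = C (k : R) * (X + C a) ^ k := by
  rcases k with _ | k
  · simp
  · rw [derivative_X_add_C_pow, Nat.add_sub_cancel, pow_succ]
    ring

theorem wronskian_add_C_mul_mul_ne_zero [IsDomain R] {p q : R[X]} (hp : p ≠ 0) (hq : q ≠ 0)
    {c : R} (hc : c ≠ 0) : wronskian q p + C c * (p * q) ≠ 0 := by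
  intro h
  have hlt := degree_wronskian_lt_add hq hp
  rw [eq_neg_of_add_eq_zero_left h, degree_neg, degree_C_mul hc, degree_mul, add_comm] at hlt
  exact hlt.false

end Wronskian

section Liouville

variable {K : Type*} [Field K] [CharZero K]

/- The equation says that `p / q` solves `f' + c f = 1 / (X + a)`. Writing
`q = (X + a)^k w` with `w(-a) ≠ 0` and evaluating at `-a` gives `-k p(-a) w(-a) = 0^k w(-a)²`:
impossible for `k = 0`, and for `k > 0` it makes `-a` a common root of `p` and `q`. -/
theorem _root_.IsCoprime.X_add_C_mul_wronskian_add_ne_sq {p q : K[X]} (hco : IsCoprime p q)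
    (hq : q ≠ 0) (a c : K) :
    (X + C a) * (wronskian q p + C c * (p * q)) ≠ q ^ 2 := by
  intro h
  obtain ⟨w, hqw, hw⟩ := exists_eq_pow_rootMultiplicity_mul_and_not_dvd q hq (-a)
  have hwa : w.eval (-a) ≠ 0 := fun h0 => hw (dvd_iff_isRoot.mpr h0)
  rw [map_neg, sub_neg_eq_add] at hqw
  generalize q.rootMultiplicity (-a) = k at hqw
  have hred : (X + C a) * (wronskian w p + C c * (p * w)) - C (k : K) * (p * w)
      = (X + C a) ^ k * w ^ 2 := by
    apply mul_left_cancel₀ (pow_ne_zero k (X_add_C_ne_zero a))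
    rw [hqw] at h
    simp only [wronskian, derivative_mul] at h ⊢
    linear_combination h + p * w * X_add_C_mul_derivative_pow a k
  have hev := congrArg (eval (-a)) hred
  simp only [wronskian, map_natCast, eval_sub, eval_mul, eval_add, eval_X, eval_C,
    neg_add_cancel, zero_mul, eval_natCast, zero_sub, eval_pow] at hev
  rcases k with _ | k
  · simp only [CharP.cast_eq_zero, zero_mul, neg_zero, pow_zero, one_mul] at hev
    exact hwa (pow_eq_zero_iff two_ne_zero |>.mp hev.symm)
  · have hpa : p.eval (-a) = 0 := by simpa [hwa, Nat.cast_add_one_ne_zero] using hev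
    have hqa : q.eval (-a) = 0 := by simp [hqw]
    obtain ⟨u, v, huv⟩ := hco
    simpa [hpa, hqa] using congrArg (eval (-a)) huv

theorem X_add_C_mul_wronskian_add_ne_sq {p q : K[X]} (hq : q ≠ 0) (a c : K) :
    (X + C a) * (wronskian q p + C c * (p * q)) ≠ q ^ 2 := by
  classical
  intro h
  obtain ⟨p', q', hp', hq', hunit⟩ := extract_gcd p q
  generalize gcd p q = d at hp' hq'
  subst hp' hq'
  refine ((gcd_isUnit_iff _ _).1 hunit).X_add_C_mul_wronskian_add_ne_sq
    (right_ne_zero_of_mul hq) a c ?_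
  apply mul_left_cancel₀ (pow_ne_zero 2 (left_ne_zero_of_mul hq))
  rw [wronskian_mul_mul] at h
  linear_combination h

end Liouville

section TotalDerivExp

variable {R : Type*} [CommRing R] (c : R)

/-- The derivation `∂ₓ + c Y ∂_Y` of `R[X][Y]`: `d/dx` transported along `Y = e^{cx}`. -/
noncomputable def totalDerivExp (B : R[X][Y]) : R[X][Y] :=
  B.sum fun i b => monomial i (derivative b + C (c * i) * b)

theorem coeff_totalDerivExp (B : R[X][Y]) (k : ℕ) :
    (totalDerivExp c B).coeff k = derivative (B.coeff k) + C (c * k) * B.coeff k := by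
  rw [totalDerivExp, Polynomial.sum, finsetSum_coeff]
  simp only [coeff_monomial, Finset.sum_ite_eq']
  split_ifs with h
  · rfl
  · simp [notMem_support_iff.1 h]

theorem totalDerivExp_add (A B : R[X][Y]) :
    totalDerivExp c (A + B) = totalDerivExp c A + totalDerivExp c B := by
  ext1 k
  simp only [coeff_totalDerivExp, coeff_add, derivative_add]
  ring

theorem totalDerivExp_monomial (n : ℕ) (b : R[X]) :
    totalDerivExp c (monomial n b) = monomial n (derivative b + C (c * n) * b) := by
  ext1 k
  simp only [coeff_totalDerivExp, coeff_monomial]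
  split_ifs with h <;> simp [h]

theorem natDegree_totalDerivExp_le (B : R[X][Y]) :
    (totalDerivExp c B).natDegree ≤ B.natDegree :=
  natDegree_le_iff_coeff_eq_zero.2 fun k hk => by
    simp [coeff_totalDerivExp, coeff_eq_zero_of_natDegree_lt hk]

theorem natDegree_totalDerivExp_mul_sub_le (A B : R[X][Y]) :
    (totalDerivExp c A * B - A * totalDerivExp c B).natDegree ≤ A.natDegree + B.natDegree :=
  (natDegree_sub_le_of_le
    (natDegree_mul_le_of_le (natDegree_totalDerivExp_le c A) le_rfl)
    (natDegree_mul_le_of_le le_rfl (natDegree_totalDerivExp_le c B))).trans (max_self _).le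

theorem coeff_totalDerivExp_mul_sub (A B : R[X][Y]) :
    (totalDerivExp c A * B - A * totalDerivExp c B).coeff (A.natDegree + B.natDegree) =
      wronskian B.leadingCoeff A.leadingCoeff +
        C (c * (A.natDegree - B.natDegree)) * (A.leadingCoeff * B.leadingCoeff) := by
  rw [coeff_sub, coeff_mul_add_eq_of_natDegree_le (natDegree_totalDerivExp_le c A) le_rfl,
    coeff_mul_add_eq_of_natDegree_le le_rfl (natDegree_totalDerivExp_le c B),
    coeff_totalDerivExp, coeff_totalDerivExp, wronskian, mul_sub, C_sub, C_mul]
  simp only [leadingCoeff, C_mul]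
  ring

end TotalDerivExp

theorem X_mul_sq_ne_C_X_add_C_mul_totalDerivExp {K : Type*} [Field K] [CharZero K] {c : K}
    (hc : c ≠ 0) (a : K) {A B : K[X][Y]} (hB : B ≠ 0) :
    X * B ^ 2 ≠ C (X + C a) * (totalDerivExp c A * B - A * totalDerivExp c B) := by
  intro h
  have hb : B.leadingCoeff ≠ 0 := leadingCoeff_ne_zero.2 hB
  have hsq : (B ^ 2).coeff (B.natDegree + B.natDegree) = B.leadingCoeff ^ 2 := by
    rw [sq, coeff_mul_add_eq_of_natDegree_le le_rfl le_rfl, sq, leadingCoeff]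
  rcases lt_trichotomy A.natDegree (B.natDegree + 1) with hmn | hmn | hmn
  · have htop := congrArg (coeff · (B.natDegree + B.natDegree + 1)) h
    simp only [coeff_X_mul, coeff_C_mul, hsq] at htop
    rw [coeff_eq_zero_of_natDegree_lt ((natDegree_totalDerivExp_mul_sub_le c A B).trans_lt
      (by omega)), mul_zero] at htop
    exact pow_ne_zero 2 hb htop
  · have htop := congrArg (coeff · (A.natDegree + B.natDegree)) h
    simp only [coeff_C_mul, coeff_totalDerivExp_mul_sub] at htop
    rw [hmn, add_right_comm, coeff_X_mul, hsq, ← hmn] at htop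
    refine X_add_C_mul_wronskian_add_ne_sq (p := A.leadingCoeff) hb a c ?_
    rw [htop, hmn, Nat.cast_add_one, add_sub_cancel_left, mul_one]
  · have hA : A ≠ 0 := by rintro rfl; simp at hmn
    have htop := congrArg (coeff · (A.natDegree + B.natDegree)) h
    simp only [coeff_C_mul, coeff_totalDerivExp_mul_sub] at htop
    rw [show A.natDegree + B.natDegree = A.natDegree + B.natDegree - 1 + 1 by omega,
      coeff_X_mul, coeff_eq_zero_of_natDegree_lt (natDegree_pow_le.trans_lt (by omega)),
      eq_comm, mul_eq_zero, or_iff_right (X_add_C_ne_zero a)] at htop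
    refine wronskian_add_C_mul_mul_ne_zero (leadingCoeff_ne_zero.2 hA) hb ?_ htop
    exact mul_ne_zero hc (sub_ne_zero.2 (Nat.cast_injective.ne (by omega)))

theorem tendsto_eval_div_exp_mul_atTop (p : ℝ[X]) {b : ℝ} (hb : 0 < b) :
    Tendsto (fun x => p.eval x / exp (b * x)) atTop (𝓝 0) := by
  refine ((p.comp (C b⁻¹ * X)).tendsto_div_exp_atTop.comp
    (tendsto_id.const_mul_atTop hb)).congr fun x => ?_
  simp [inv_mul_cancel_left₀ hb.ne']

/- Dividing `S(x, e^{cx}) = 0` by `e^{cnx}` shows that the leading coefficient of `S`, a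
polynomial in `x`, tends to `0`. -/
theorem eq_zero_of_eventually_evalEval_exp_eq_zero {c : ℝ} (hc : 0 < c) {S : ℝ[X][Y]}
    (h : ∀ᶠ x in atTop, S.evalEval x (exp (c * x)) = 0) : S = 0 := by
  set n := S.natDegree
  have hlower : Tendsto (fun x => ∑ i ∈ Finset.range n,
      (S.coeff i).eval x / exp (c * (n - i) * x)) atTop (𝓝 0) := by
    simpa using tendsto_finsetSum _ fun i hi => (S.coeff i).tendsto_eval_div_exp_mul_atTop
      (mul_pos hc (sub_pos.2 (Nat.cast_lt.2 (Finset.mem_range.1 hi))))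
  have hlead : Tendsto (fun x => S.leadingCoeff.eval x) atTop (𝓝 0) := by
    refine neg_zero (G := ℝ) ▸ hlower.neg.congr' ?_
    filter_upwards [h] with x hx
    rw [evalEval, eval_eq_sum_range (p := S), eval_finsetSum, Finset.sum_range_succ] at hx
    simp only [eval_mul, eval_pow, eval_C] at hx
    have hterm : ∀ i ∈ Finset.range n, (S.coeff i).eval x / exp (c * (n - i) * x) =
        (S.coeff i).eval x * exp (c * x) ^ i / exp (c * x) ^ n := fun i _ => by
      rw [← exp_nat_mul, ← exp_nat_mul, div_eq_div_iff (exp_pos _).ne' (exp_pos _).ne',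
        mul_assoc, ← exp_add]
      congr 2
      ring
    rw [Finset.sum_congr rfl hterm, ← Finset.sum_div, eq_neg_of_add_eq_zero_left hx, neg_div,
      neg_neg, mul_div_cancel_right₀ _ (pow_ne_zero _ (exp_pos _).ne'), leadingCoeff]
  exact leadingCoeff_eq_zero.1 (leadingCoeff_eq_zero.1 ((tendsto_nhds_iff _).1 hlead).1)

theorem hasDerivAt_evalEval_exp (c : ℝ) (B : ℝ[X][Y]) (x : ℝ) :
    HasDerivAt (fun y => B.evalEval y (exp (c * y)))
      ((totalDerivExp c B).evalEval x (exp (c * x))) x := by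
  induction B using Polynomial.induction_on' with
  | add A B hA hB =>
    simp only [totalDerivExp_add, evalEval_add]
    exact hA.add hB
  | monomial n b =>
    have hexp : ∀ y, exp (c * y) ^ n = exp (c * n * y) := fun y => by
      rw [← exp_nat_mul]; congr 1; ring
    simp only [totalDerivExp_monomial, evalEval, eval_monomial, ← C_pow, eval_mul, eval_C,
      eval_add, hexp]
    refine ((b.hasDerivAt x).mul ((hasDerivAt_id x).const_mul (c * n)).exp).congr_deriv ?_
    simp only [id, mul_one]
    ring

end Polynomial

theorem HasDerivAt.mul_sq_eq_of_mul_eventuallyEq {𝕜 : Type*} [NontriviallyNormedField 𝕜]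
    {f g h : 𝕜 → 𝕜} {f' g' h' x : 𝕜} (hf : HasDerivAt f f' x) (hg : HasDerivAt g g' x)
    (hh : HasDerivAt h h' x) (hfg : f * g =ᶠ[𝓝 x] h) :
    f' * g x ^ 2 = h' * g x - h x * g' := by
  have hderiv := (hf.mul hg).unique (hh.congr_of_eventuallyEq hfg)
  have hval : f x * g x = h x := hfg.eq_of_nhds
  linear_combination g x * hderiv - g' * hval

open Polynomial in
theorem X_mul_sq_eq_of_eq_div_evalEval_exp {c a : ℝ} (hc : 0 < c) {E : ℝ → ℝ}
    {A B : ℝ[X][Y]} (hE : ∀ x, -a < x → HasDerivAt E (exp (c * x) / (x + a)) x)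
    (hB : ∀ x, -a < x → B.evalEval x (exp (c * x)) ≠ 0)
    (hEAB : ∀ x, -a < x → E x = A.evalEval x (exp (c * x)) / B.evalEval x (exp (c * x))) :
    X * B ^ 2 = C (X + C a) * (totalDerivExp c A * B - A * totalDerivExp c B) := by
  rw [← sub_eq_zero]
  refine eq_zero_of_eventually_evalEval_exp_eq_zero hc ?_
  filter_upwards [eventually_gt_atTop (-a)] with x hx
  have hxa : x + a ≠ 0 := by linarith
  have hquot := (hE x hx).mul_sq_eq_of_mul_eventuallyEq (hasDerivAt_evalEval_exp c B x)
    (hasDerivAt_evalEval_exp c A x) <| eventually_of_mem (Ioi_mem_nhds hx) fun y hy => by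
      simp only [Pi.mul_apply, hEAB y hy, div_mul_cancel₀ _ (hB y hy)]
  simp only [evalEval_sub, evalEval_mul, evalEval_pow, evalEval_X, evalEval_C, eval_add, eval_X,
    eval_C]
  field_simp at hquot
  linear_combination hquot

theorem hasDerivAt_integral_exp_mul_div {c a x₀ x : ℝ} (hx₀ : -a < x₀) (hx : -a < x) :
    HasDerivAt (fun y => ∫ t in x₀..y, exp (c * t) / (t + a)) (exp (c * x) / (x + a)) x := by
  have hcont : ContinuousOn (fun t => exp (c * t) / (t + a)) (Set.Ioi (-a)) :=
    ContinuousOn.div (by fun_prop) (by fun_prop) fun t ht => by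
      simp only [Set.mem_Ioi] at ht; linarith
  exact intervalIntegral.integral_hasDerivAt_right
    ((hcont.mono (Set.ordConnected_Ioi.uIcc_subset hx₀ hx)).intervalIntegrable)
    (hcont.stronglyMeasurableAtFilter isOpen_Ioi x hx) (hcont.continuousAt (Ioi_mem_nhds hx))

namespace MvPolynomial

variable {R : Type*} [CommRing R]

noncomputable def toBivariate : MvPolynomial (Fin 2) R →ₐ[R] R[X][Y] :=
  aeval ![Polynomial.C Polynomial.X, Polynomial.X]

theorem evalEval_toBivariate (p : MvPolynomial (Fin 2) R) (x y : R) :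
    (toBivariate p).evalEval x y = eval ![x, y] p := by
  show (evalEvalRingHom x y).comp toBivariate.toRingHom p = _
  congr 1
  refine ringHom_ext (fun r => by simp [toBivariate]) fun i => ?_
  fin_cases i <;> simp [toBivariate]

end MvPolynomial

/-- The function `E(x) = ∫₀ˣ e^{2t}/(t+1) dt` on `(−1, ∞)` is not a rational function
of `x` and `e^{2x}`: there are no real polynomials `P, Q` in two variables with
`Q(x, e^{2x}) ≠ 0` on `(−1, ∞)` and `E(x) = P(x, e^{2x})/Q(x, e^{2x})` on `(−1, ∞)`. -/
theorem exponential_integral_not_rational :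
    ¬ ∃ P Q : MvPolynomial (Fin 2) ℝ,
      (∀ x ∈ Set.Ioi (-1 : ℝ),
        MvPolynomial.eval ![x, Real.exp (2 * x)] Q ≠ 0) ∧
      (∀ x ∈ Set.Ioi (-1 : ℝ),
        (∫ t in (0 : ℝ)..x, Real.exp (2 * t) / (t + 1)) =
          MvPolynomial.eval ![x, Real.exp (2 * x)] P /
            MvPolynomial.eval ![x, Real.exp (2 * x)] Q) := by
  rintro ⟨P, Q, hQ, hPQ⟩
  have hB : Q.toBivariate ≠ 0 := fun h0 =>
    hQ 0 (by norm_num) (by rw [← MvPolynomial.evalEval_toBivariate, h0, evalEval_zero])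
  have hidentity := X_mul_sq_eq_of_eq_div_evalEval_exp (a := 1) (A := P.toBivariate)
    (B := Q.toBivariate) two_pos
    (fun x hx => hasDerivAt_integral_exp_mul_div (x₀ := 0) (by norm_num) hx)
    (fun x hx => by simpa only [MvPolynomial.evalEval_toBivariate] using hQ x hx)
    (fun x hx => by simpa only [MvPolynomial.evalEval_toBivariate] using hPQ x hx)
  exact X_mul_sq_ne_C_X_add_C_mul_totalDerivExp two_ne_zero 1 hB hidentity
end
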